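/- Let F be the free group on a finite set X and let R be the normal closure in F of a set C of commutators [x, y] of pairs of distinct generators x, y ∈ X. Then the homomorphism Φ: R/[F,R] → [F,F]/[F,[F,F]] induced by the inclusion R ⊆ [F,F] is injective. -/

import Mathlib

open scoped commutatorElement IsMulCommutative

open Subgroup

/-! The image of `R` in `F ⧸ [F, R]` is central, so a conjugate `a ⁅u, v⁆ a⁻¹` of a relator
has the same class as `⁅u, v⁆`, and every `r ∈ R` satisfies `r ≡ ∏_{x < y} ⁅x, y⁆ ^ n_{xy}(r)`
modulo `[F, R]`. The exponent `n_{xy}(r)` is read off from the image of `r` under the map from `F`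
to the integral Heisenberg group sending `x` and `y` to its two standard generators and every
other generator to `1`. The Heisenberg group is nilpotent of class 2, so these exponents vanish on
`[F, [F, F]]`, and an element of `R ∩ [F, [F, F]]` lies in `[F, R]`. -/

lemma commutatorElement_mem_commutator {G : Type*} [Group G] (g h : G) :
    ⁅g, h⁆ ∈ commutator G :=
  commutator_mem_commutator (mem_top g) (mem_top h)

lemma MonoidHom.map_conj_eq_of_mem_center {G H : Type*} [Group G] [Group H] (f : G →* H)
    {c : G} (hc : f c ∈ center H) (a : G) : f (a * c * a⁻¹) = f c := by
  rw [map_mul, map_mul, map_inv, mem_center_iff.mp hc, mul_inv_cancel_right]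

namespace Subgroup

variable {G : Type*} [Group G]

lemma normalClosure_le_commutator {C : Set G} (hC : ∀ r ∈ C, ∃ x y : G, r = ⁅x, y⁆) :
    normalClosure C ≤ _root_.commutator G := by
  refine normalClosure_le_normal fun r hr => ?_
  obtain ⟨x, y, rfl⟩ := hC r hr
  exact commutatorElement_mem_commutator x y

variable (R : Subgroup G) [R.Normal]

lemma mk_mem_center_quotient_commutator {r : G} (hr : r ∈ R) :
    (r : G ⧸ ⁅(⊤ : Subgroup G), R⁆) ∈ center (G ⧸ ⁅(⊤ : Subgroup G), R⁆) := by
  refine mem_center_iff.mpr fun q => ?_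
  induction q using QuotientGroup.induction_on with | H a => ?_
  rw [← QuotientGroup.mk_mul, ← QuotientGroup.mk_mul, QuotientGroup.eq, commutator_comm]
  convert commutator_mem_commutator (inv_mem hr) (mem_top a⁻¹) using 1
  group

def toCenterQuotientCommutator : R →* center (G ⧸ ⁅(⊤ : Subgroup G), R⁆) :=
  ((QuotientGroup.mk' _).comp R.subtype).codRestrict _ fun r =>
    mk_mem_center_quotient_commutator R r.2

lemma toCenterQuotientCommutator_conj {r : G} (hr : r ∈ R) (a : G) (h : a * r * a⁻¹ ∈ R) :
    toCenterQuotientCommutator R ⟨a * r * a⁻¹, h⟩ = toCenterQuotientCommutator R ⟨r, hr⟩ :=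
  Subtype.ext <| (QuotientGroup.mk' _).map_conj_eq_of_mem_center
    (mk_mem_center_quotient_commutator R hr) a

end Subgroup

/-- `⟨a, b, c⟩` is the matrix `!![1, a, c; 0, 1, b; 0, 0, 1]`. -/
@[ext] structure Heisenberg where
  a : ℤ
  b : ℤ
  c : ℤ

namespace Heisenberg

instance : Mul Heisenberg := ⟨fun p q => ⟨p.a + q.a, p.b + q.b, p.c + q.c + p.a * q.b⟩⟩
instance : One Heisenberg := ⟨⟨0, 0, 0⟩⟩
instance : Inv Heisenberg := ⟨fun p => ⟨-p.a, -p.b, -p.c + p.a * p.b⟩⟩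

@[simp] lemma mul_a (p q : Heisenberg) : (p * q).a = p.a + q.a := rfl
@[simp] lemma mul_b (p q : Heisenberg) : (p * q).b = p.b + q.b := rfl
@[simp] lemma mul_c (p q : Heisenberg) : (p * q).c = p.c + q.c + p.a * q.b := rfl
@[simp] lemma one_a : (1 : Heisenberg).a = 0 := rfl
@[simp] lemma one_b : (1 : Heisenberg).b = 0 := rfl
@[simp] lemma one_c : (1 : Heisenberg).c = 0 := rfl
@[simp] lemma inv_a (p : Heisenberg) : p⁻¹.a = -p.a := rfl
@[simp] lemma inv_b (p : Heisenberg) : p⁻¹.b = -p.b := rfl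
@[simp] lemma inv_c (p : Heisenberg) : p⁻¹.c = -p.c + p.a * p.b := rfl

instance : Group Heisenberg where
  mul_assoc p q r := by ext <;> simp only [mul_a, mul_b, mul_c] <;> ring
  one_mul p := by ext <;> simp
  mul_one p := by ext <;> simp
  inv_mul_cancel p := by ext <;> simp

lemma commutator_eq (g h : Heisenberg) : ⁅g, h⁆ = ⟨0, 0, g.a * h.b - h.a * g.b⟩ := by
  rw [commutatorElement_def]
  ext <;> simp
  ring

lemma a_eq_zero_of_mem_center {g : Heisenberg} (hg : g ∈ center Heisenberg) : g.a = 0 := by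
  simpa using congrArg c (mem_center_iff.mp hg ⟨0, 1, 0⟩)

lemma commutator_le_center : commutator Heisenberg ≤ center Heisenberg := by
  refine commutator_le.mpr fun g _ h _ => mem_center_iff.mpr fun k => ?_
  rw [commutator_eq]
  simp [Heisenberg.ext_iff, add_comm]

lemma lowerCentralSeries_two : (⊤ : Subgroup Heisenberg).lowerCentralSeries 2 = ⊥ :=
  Subgroup.lowerCentralSeries_succ_eq_bot _ commutator_le_center

def centerCoord : center Heisenberg →* Multiplicative ℤ where
  toFun g := .ofAdd (g : Heisenberg).c
  map_one' := rfl
  map_mul' g h := by simp [a_eq_zero_of_mem_center g.2]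

end Heisenberg

namespace FreeGroup

section Heisenberg

variable {X : Type*} [DecidableEq X]

def toHeisenberg (x y : X) : FreeGroup X →* Heisenberg :=
  FreeGroup.lift fun z => if z = x then ⟨1, 0, 0⟩ else if z = y then ⟨0, 1, 0⟩ else 1

lemma toHeisenberg_mem_center (x y : X) {g : FreeGroup X} (hg : g ∈ commutator (FreeGroup X)) :
    toHeisenberg x y g ∈ center Heisenberg := by
  refine Heisenberg.commutator_le_center ?_
  have := mem_map_of_mem (toHeisenberg x y) hg
  rw [commutator_def, map_commutator] at this
  exact commutator_mono le_top le_top this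

/-- The coordinate of the basic commutator `⁅x, y⁆` in `[F, F] ⧸ [F, [F, F]]`. -/
def commutatorCoeff (x y : X) : commutator (FreeGroup X) →* Multiplicative ℤ :=
  Heisenberg.centerCoord.comp
    (((toHeisenberg x y).comp (commutator _).subtype).codRestrict _
      fun g => toHeisenberg_mem_center x y g.2)

lemma toAdd_commutatorCoeff (x y : X) (g : commutator (FreeGroup X)) :
    (commutatorCoeff x y g).toAdd = (toHeisenberg x y g).c := rfl

lemma toAdd_commutatorCoeff_of {x y u v : X} (huv : u ≠ v) :
    (commutatorCoeff x y ⟨⁅of u, of v⁆, commutatorElement_mem_commutator _ _⟩).toAdd =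
      (if u = x ∧ v = y then 1 else 0) - (if v = x ∧ u = y then 1 else 0) := by
  rw [toAdd_commutatorCoeff, map_commutatorElement, Heisenberg.commutator_eq]
  simp only [toHeisenberg, lift_apply_of]
  split_ifs <;> simp_all

lemma commutatorCoeff_conj (x y : X) {g : FreeGroup X} (hg : g ∈ commutator (FreeGroup X))
    (a : FreeGroup X) (h : a * g * a⁻¹ ∈ commutator (FreeGroup X)) :
    commutatorCoeff x y ⟨a * g * a⁻¹, h⟩ = commutatorCoeff x y ⟨g, hg⟩ :=
  Multiplicative.toAdd.injective <|
    congrArg Heisenberg.c ((toHeisenberg x y).map_conj_eq_of_mem_center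
      (toHeisenberg_mem_center x y hg) a)

lemma commutatorCoeff_eq_one (x y : X) {g : FreeGroup X} (hg₁ : g ∈ commutator (FreeGroup X))
    (hg : g ∈ (⊤ : Subgroup (FreeGroup X)).lowerCentralSeries 2) :
    commutatorCoeff x y ⟨g, hg₁⟩ = 1 := by
  have hmap := mem_map_of_mem (toHeisenberg x y) hg
  rw [map_lowerCentralSeries] at hmap
  have : toHeisenberg x y g ∈ (⊤ : Subgroup Heisenberg).lowerCentralSeries 2 :=
    lowerCentralSeries_mono 2 le_top hmap
  rw [Heisenberg.lowerCentralSeries_two, mem_bot] at this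
  rw [← toAdd_eq_zero (α := ℤ), toAdd_commutatorCoeff, this]
  rfl

end Heisenberg

section Relators

variable {X : Type*} [LinearOrder X] [Finite X]

/-- Oriented so that `⁅x, y⁆` and `⁅y, x⁆ = ⁅x, y⁆⁻¹` are not counted twice. -/
abbrev RelatorPair (R : Subgroup (FreeGroup X)) : Type _ :=
  {p : X × X // p.1 < p.2 ∧ ⁅of p.1, of p.2⁆ ∈ R}

namespace RelatorPair

variable {R : Subgroup (FreeGroup X)}

noncomputable instance : Fintype (RelatorPair R) := Fintype.ofFinite _

def relator (p : RelatorPair R) : R := ⟨⁅of p.1.1, of p.1.2⁆, p.2.2⟩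

end RelatorPair

lemma toCenterQuotientCommutator_commutator_of {C : Set (FreeGroup X)} {u v : X} (huv : u ≠ v)
    (hR : ⁅of u, of v⁆ ∈ normalClosure C) :
    toCenterQuotientCommutator _ ⟨_, hR⟩ =
      ∏ p : RelatorPair (normalClosure C), toCenterQuotientCommutator _ p.relator ^
        (commutatorCoeff p.1.1 p.1.2
          ⟨_, commutatorElement_mem_commutator (of u) (of v)⟩).toAdd := by
  wlog hlt : u < v generalizing u v
  · have hR' : ⁅of v, of u⁆ ∈ normalClosure C := by
      simpa only [commutatorElement_inv] using inv_mem hR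
    have hswap : ∀ {K : Subgroup (FreeGroup X)} (hK : ⁅of u, of v⁆ ∈ K)
        (hK' : ⁅of v, of u⁆ ∈ K), (⟨_, hK⟩ : K) = (⟨_, hK'⟩ : K)⁻¹ :=
      fun _ _ => Subtype.ext (commutatorElement_inv _ _).symm
    rw [hswap hR hR', hswap _ (commutatorElement_mem_commutator _ _),
      _root_.map_inv, this huv.symm hR' (huv.symm.lt_of_le (not_lt.mp hlt)),
      ← Finset.prod_inv_distrib]
    simp only [_root_.map_inv, toAdd_inv, zpow_neg]
  rw [Fintype.prod_eq_single ⟨(u, v), hlt, hR⟩ fun p hp => ?_]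
  · simp [RelatorPair.relator, toAdd_commutatorCoeff_of huv, huv.symm]
  · rw [toAdd_commutatorCoeff_of huv, if_neg, if_neg, sub_zero, zpow_zero]
    · rintro ⟨rfl, rfl⟩
      exact lt_asymm hlt p.2.1
    · rintro ⟨rfl, rfl⟩
      exact hp rfl

theorem toCenterQuotientCommutator_eq_prod {C : Set (FreeGroup X)}
    (hC : ∀ r ∈ C, ∃ x y : X, x ≠ y ∧ r = ⁅of x, of y⁆) (r : normalClosure C)
    (hr : (r : FreeGroup X) ∈ commutator (FreeGroup X)) :
    toCenterQuotientCommutator _ r =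
      ∏ p : RelatorPair (normalClosure C),
        toCenterQuotientCommutator _ p.relator ^ (commutatorCoeff p.1.1 p.1.2 ⟨r, hr⟩).toAdd := by
  have hR : normalClosure C ≤ commutator (FreeGroup X) :=
    normalClosure_le_commutator fun c hc => let ⟨x, y, _, hxy⟩ := hC c hc; ⟨of x, of y, hxy⟩
  have key : toCenterQuotientCommutator (normalClosure C) =
      ∏ p : RelatorPair (normalClosure C),
        (zpowersHom _ (toCenterQuotientCommutator _ p.relator)).comp
          ((commutatorCoeff p.1.1 p.1.2).comp (inclusion hR)) := by
    have hdense : closure ((↑) ⁻¹' Group.conjugatesOfSet C : Set (normalClosure C)) = ⊤ :=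
      closure_closure_coe_preimage
    refine MonoidHom.eq_of_eqOn_dense hdense ?_
    rintro ⟨g, hg⟩ hgen
    obtain ⟨c, hc, hconj⟩ := Group.mem_conjugatesOfSet_iff.mp hgen
    obtain ⟨a, rfl⟩ := isConj_iff.mp hconj
    obtain ⟨u, v, huv, rfl⟩ := hC c hc
    have hcR : ⁅of u, of v⁆ ∈ normalClosure C := subset_normalClosure hc
    rw [toCenterQuotientCommutator_conj _ hcR, MonoidHom.finsetProd_apply,
      toCenterQuotientCommutator_commutator_of huv hcR]
    refine Finset.prod_congr rfl fun p _ => ?_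
    simp only [MonoidHom.comp_apply, zpowersHom_apply]
    rw [← commutatorCoeff_conj _ _ (hR hcR) a]
    rfl
  rw [show (⟨r, hr⟩ : commutator (FreeGroup X)) = inclusion hR r from rfl]
  simpa [MonoidHom.finsetProd_apply] using DFunLike.congr_fun key r

end Relators

end FreeGroup

/-- Let `F` be the free group on a finite set `X` and `R` the normal closure of a set `C`
of commutators of pairs of distinct generators. Then the homomorphism
`Φ : R/[F,R] → [F,F]/[F,[F,F]]` induced by the inclusion `R ⊆ [F,F]` is injective;
equivalently (triviality of its kernel), every element of `R` lying in
`[F,[F,F]] = lowerCentralSeries F 2` already lies in `[F,R]`. -/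
theorem stmt15 (X : Type) [Fintype X] (C : Set (FreeGroup X))
    (hC : ∀ r ∈ C, ∃ x y : X, x ≠ y ∧ r = ⁅FreeGroup.of x, FreeGroup.of y⁆) :
    ∀ g ∈ Subgroup.normalClosure C,
      g ∈ (⊤ : Subgroup (FreeGroup X)).lowerCentralSeries 2 →
      g ∈ ⁅(⊤ : Subgroup (FreeGroup X)), Subgroup.normalClosure C⁆ := by
  intro g hg hg₂
  classical
  let _ : LinearOrder X := linearOrderOfSTO WellOrderingRel
  have hg₁ : g ∈ commutator (FreeGroup X) :=
    Subgroup.lowerCentralSeries_antitone ⊤ one_le_two hg₂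
  have h := FreeGroup.toCenterQuotientCommutator_eq_prod hC ⟨g, hg⟩ hg₁
  simp only [FreeGroup.commutatorCoeff_eq_one _ _ hg₁ hg₂, toAdd_one, zpow_zero,
    Finset.prod_const_one] at h
  exact (QuotientGroup.eq_one_iff g).mp (congrArg Subtype.val h)
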